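/- arXiv:1312.6438 — 6 statements merged into one kernel-verified Lean document; each statement's English description precedes it below -/
import Mathlib

section
/- For any finite set A in an abelian group, the sum over all s of |A + A_s| equals |A² + Δ(A)|, where A² = A × A ⊂ G × G, Δ(A) = {(a,a) : a ∈ A}, A_s = A ∩ (A − s), and the sum runs over s ∈ A − A. -/
open Finset Pointwise

theorem stmt4 {G : Type*} [AddCommGroup G] [DecidableEq G] (A : Finset G) :
    ∑ s ∈ A - A, (A + (A ∩ A.image (fun a => a - s))).card =
      ((A ×ˢ A) + A.image (fun a => (a, a))).card := by
  have key : ((A ×ˢ A) + A.image (fun a => (a, a))) =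
      (A - A).biUnion (fun s =>
        (A + (A ∩ A.image (fun a => a - s))).image (fun y => (y + s, y))) := by
    ext ⟨x, y⟩
    simp only [mem_add, mem_biUnion, mem_image, mem_product, mem_sub, mem_inter,
      Prod.ext_iff, Prod.mk_add_mk]
    constructor
    · rintro ⟨⟨a1, a2⟩, ⟨ha1, ha2⟩, ⟨p, q⟩, ⟨a, ha, rfl, rfl⟩, rfl, rfl⟩
      refine ⟨a1 - a2, ⟨a1, ha1, a2, ha2, rfl⟩, a2 + a,
        ⟨a, ha, a2, ⟨ha2, ⟨a1, ha1, by abel⟩⟩, by abel⟩, by simp only [Prod.mk_add_mk]; abel, rfl⟩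
    · rintro ⟨s, ⟨b1, hb1, b2, hb2, rfl⟩, y', ⟨c, hc, d, ⟨hd, e, he, hes⟩, rfl⟩, rfl, rfl⟩
      exact ⟨(e, d), ⟨he, hd⟩, (c, c), ⟨c, hc, rfl, rfl⟩,
        by simp only [Prod.mk_add_mk]; rw [← hes]; abel, by simp only [Prod.mk_add_mk]; abel⟩
  rw [key, card_biUnion]
  · refine Finset.sum_congr rfl fun s hs => ?_
    rw [card_image_of_injective _ (fun a b h => (Prod.ext_iff.1 h).2)]
  · intro s hs t ht hst
    simp only [disjoint_left, mem_image]
    rintro ⟨x, y⟩ ⟨u, hu, h⟩ ⟨v, hv, h'⟩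
    rw [← h'] at h
    obtain ⟨h1, h2⟩ := Prod.ext_iff.1 h
    subst h2
    exact hst (add_left_cancel h1)
end

section
/- Let A, B, X be finite sets of real numbers with |X| ≤ |A||B|. Then the sum over x ∈ X of the additive energy E⁺(A, xB) is O(|A|^{3/2}|B|^{3/2}|X|^{1/2}), where xB = {xb : b ∈ B} and E⁺(A,C) is the number of quadruples (a1,c1,a2,c2) ∈ A×C×A×C with a1 + c1 = a2 + c2. -/
/-!
For `x ≠ 0`, `E⁺(A, xB)` counts the pairs of points of `A × B` lying on a common line
`a + x b = c` (`lineEnergy x A B`). Two distinct points lie on such a line for at most one `x`,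
so `∑ₓ lineEnergy x A B ≤ |X||A||B| + (|A||B|)²`. To improve this, cut `A` and `B` into `r`
blocks of consecutive elements. A line `a + x b = c` is monotone, so it meets at most `2r` of the
`r²` cells, and Cauchy–Schwarz over these cells bounds `lineEnergy x A B` by `2r` times the sum of
the energies of the cells. The crude bound on each cell then gives
`∑ₓ lineEnergy x A B ≤ 2r|X||A||B| + 8(|A||B|)²/r`, and `r ≈ √(|A||B|/|X|)` gives the claim.
If this `r` exceeds `min(|A|, |B|)`, the trivial bound `lineEnergy x A B ≤ |A||B| min(|A|, |B|)`
suffices, and `x = 0` contributes at most `|A|`.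
-/

open Finset

section Collisions

variable {α β γ : Type*} [DecidableEq β]

def collisionCount (f : α → β) (T : Finset α) : ℕ := #{q ∈ T ×ˢ T | f q.1 = f q.2}

lemma collisionCount_eq_sum_sq (f : α → β) {T : Finset α} {C : Finset β}
    (hC : T.image f ⊆ C) : collisionCount f T = ∑ c ∈ C, #{t ∈ T | f t = c} ^ 2 := by
  rw [collisionCount, card_eq_sum_card_fiberwise (f := fun q => f q.1) (t := C)]
  · refine sum_congr rfl fun c _ => ?_
    rw [sq, ← card_product]
    congr 1
    ext q
    simp only [mem_filter, mem_product]
    grind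
  · intro q hq
    exact hC (mem_image_of_mem f (mem_product.1 (mem_filter.1 hq).1).1)

lemma collisionCount_le_mul (f : α → β) {T : Finset α} {m : ℕ}
    (h : ∀ c, #{t ∈ T | f t = c} ≤ m) : collisionCount f T ≤ m * #T :=
  calc collisionCount f T = ∑ c ∈ T.image f, #{t ∈ T | f t = c} ^ 2 :=
        collisionCount_eq_sum_sq f subset_rfl
    _ ≤ ∑ c ∈ T.image f, m * #{t ∈ T | f t = c} :=
        sum_le_sum fun c _ => by rw [sq]; exact Nat.mul_le_mul_right _ (h c)
    _ = m * #T := by rw [← mul_sum, ← card_eq_sum_card_image]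

lemma collisionCount_image_le [DecidableEq α] [DecidableEq γ] (g : α → β) (f : β → γ)
    (T : Finset α) : collisionCount f (T.image g) ≤ collisionCount (f ∘ g) T := by
  refine card_le_card_of_surjOn (Prod.map g g) ?_
  rintro ⟨_, _⟩ hq
  simp only [coe_filter, mem_product, mem_image, Set.mem_ofPred_eq] at hq
  obtain ⟨⟨⟨p, hp, rfl⟩, q, hq, rfl⟩, hpq⟩ := hq
  exact ⟨(p, q), by simpa [hp, hq] using hpq, rfl⟩

/-- Cauchy–Schwarz on each fibre of `f`, which meets at most `m` of the classes of `ψ`. -/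
lemma collisionCount_le_mul_sum [DecidableEq γ] (f : α → β) (ψ : α → γ) (T : Finset α)
    {m : ℕ} (hm : ∀ c, #({t ∈ T | f t = c}.image ψ) ≤ m) :
    collisionCount f T ≤ m * ∑ e ∈ T.image ψ, collisionCount f {t ∈ T | ψ t = e} := by
  have fibre_sq : ∀ c, #{t ∈ T | f t = c} ^ 2
      ≤ m * ∑ e ∈ T.image ψ, #{t ∈ {t ∈ T | ψ t = e} | f t = c} ^ 2 := by
    intro c
    set F := {t ∈ T | f t = c}
    have hF : F.image ψ ⊆ T.image ψ := image_subset_image (filter_subset _ _)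
    calc #F ^ 2 = (∑ e ∈ F.image ψ, #{t ∈ F | ψ t = e}) ^ 2 := by
          rw [← card_eq_sum_card_image]
      _ ≤ #(F.image ψ) * ∑ e ∈ F.image ψ, #{t ∈ F | ψ t = e} ^ 2 := sq_sum_le_card_mul_sum_sq
      _ ≤ m * ∑ e ∈ T.image ψ, #{t ∈ F | ψ t = e} ^ 2 :=
          Nat.mul_le_mul (hm c) (sum_le_sum_of_subset hF)
      _ = m * ∑ e ∈ T.image ψ, #{t ∈ {t ∈ T | ψ t = e} | f t = c} ^ 2 := by
          simp only [F, filter_filter, and_comm]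
  calc collisionCount f T = ∑ c ∈ T.image f, #{t ∈ T | f t = c} ^ 2 :=
        collisionCount_eq_sum_sq f subset_rfl
    _ ≤ ∑ c ∈ T.image f, m * ∑ e ∈ T.image ψ, #{t ∈ {t ∈ T | ψ t = e} | f t = c} ^ 2 :=
        sum_le_sum fun c _ => fibre_sq c
    _ = m * ∑ e ∈ T.image ψ, collisionCount f {t ∈ T | ψ t = e} := by
        rw [← mul_sum, sum_comm]
        congr 1
        refine sum_congr rfl fun e _ => (collisionCount_eq_sum_sq f ?_).symm
        exact image_subset_image (filter_subset _ _)

end Collisions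

section Field

variable {K : Type*} [Field K]

lemma eq_of_add_mul_eq_add_mul {p q : K × K} (hpq : p ≠ q) {x y : K}
    (hx : p.1 + x * p.2 = q.1 + x * q.2) (hy : p.1 + y * p.2 = q.1 + y * q.2) : x = y := by
  have h : (x - y) * (p.2 - q.2) = 0 := by linear_combination hx - hy
  rcases mul_eq_zero.1 h with h | h
  · exact sub_eq_zero.1 h
  · have h2 : p.2 = q.2 := sub_eq_zero.1 h
    exact absurd (Prod.ext (by rw [h2] at hx; exact add_right_cancel hx) h2) hpq

variable [DecidableEq K]

def lineEnergy (x : K) (A B : Finset K) : ℕ :=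
  collisionCount (fun p : K × K => p.1 + x * p.2) (A ×ˢ B)

/-- A pair of distinct points is counted by `lineEnergy x` for at most one `x`. -/
lemma sum_lineEnergy_le (S A B : Finset K) :
    ∑ x ∈ S, lineEnergy x A B ≤ #S * (#A * #B) + (#A * #B) ^ 2 := by
  set T := A ×ˢ B
  have hoff : ∀ q ∈ T.offDiag, #{x ∈ S | q.1.1 + x * q.1.2 = q.2.1 + x * q.2.2} ≤ 1 := by
    intro q hq
    refine card_le_one.2 fun x hx y hy => ?_
    exact eq_of_add_mul_eq_add_mul (mem_offDiag.1 hq).2.2 (mem_filter.1 hx).2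
      (mem_filter.1 hy).2
  calc ∑ x ∈ S, lineEnergy x A B
      = ∑ q ∈ T ×ˢ T, #{x ∈ S | q.1.1 + x * q.1.2 = q.2.1 + x * q.2.2} :=
        sum_card_bipartiteAbove_eq_sum_card_bipartiteBelow _
    _ = ∑ q ∈ T.diag, #{x ∈ S | q.1.1 + x * q.1.2 = q.2.1 + x * q.2.2}
        + ∑ q ∈ T.offDiag, #{x ∈ S | q.1.1 + x * q.1.2 = q.2.1 + x * q.2.2} := by
        rw [← diag_union_offDiag, sum_union (disjoint_diag_offDiag _)]
    _ ≤ ∑ _q ∈ T.diag, #S + ∑ _q ∈ T.offDiag, 1 :=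
        add_le_add (sum_le_sum fun _ _ => card_filter_le _ _) (sum_le_sum hoff)
    _ ≤ #S * (#A * #B) + (#A * #B) ^ 2 := by
        simp only [sum_const, smul_eq_mul, mul_one, diag_card, offDiag_card, T, card_product]
        rw [mul_comm, sq]
        omega

lemma card_filter_add_mul_eq_le_card_right (x c : K) (A B : Finset K) :
    #{p ∈ A ×ˢ B | p.1 + x * p.2 = c} ≤ #B := by
  refine card_le_card_of_injOn Prod.snd (fun p hp => ?_) fun p hp q hq hpq => ?_
  · exact (mem_product.1 (mem_filter.1 hp).1).2
  · have hp := (mem_filter.1 hp).2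
    have hq := (mem_filter.1 hq).2
    refine Prod.ext ?_ hpq
    rw [← hq, hpq] at hp
    exact add_right_cancel hp

lemma card_filter_add_mul_eq_le_card_left {x : K} (hx : x ≠ 0) (c : K) (A B : Finset K) :
    #{p ∈ A ×ˢ B | p.1 + x * p.2 = c} ≤ #A := by
  refine card_le_card_of_injOn Prod.fst (fun p hp => ?_) fun p hp q hq hpq => ?_
  · exact (mem_product.1 (mem_filter.1 hp).1).1
  · have hp := (mem_filter.1 hp).2
    have hq := (mem_filter.1 hq).2
    refine Prod.ext hpq (mul_left_cancel₀ hx ?_)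
    rw [← hq, hpq] at hp
    exact add_left_cancel hp

lemma lineEnergy_le_card_right (x : K) (A B : Finset K) : lineEnergy x A B ≤ #B * (#A * #B) :=
  (collisionCount_le_mul _ fun c => card_filter_add_mul_eq_le_card_right x c A B).trans_eq
    (by rw [card_product])

lemma lineEnergy_le_card_left {x : K} (hx : x ≠ 0) (A B : Finset K) :
    lineEnergy x A B ≤ #A * (#A * #B) :=
  (collisionCount_le_mul _ fun c => card_filter_add_mul_eq_le_card_left hx c A B).trans_eq
    (by rw [card_product])

lemma collisionCount_add_product_image_mul_le (x : K) (A B : Finset K) :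
    collisionCount (fun p : K × K => p.1 + p.2) (A ×ˢ B.image (x * ·)) ≤
      lineEnergy x A B := by
  have h : A ×ˢ B.image (x * ·) = (A ×ˢ B).image (Prod.map id (x * ·)) := by
    rw [prodMap_image_product, image_id]
  rw [h]
  exact collisionCount_image_le _ _ _

lemma collisionCount_add_product_image_zero_mul_le (A B : Finset K) :
    collisionCount (fun p : K × K => p.1 + p.2) (A ×ˢ B.image (0 * ·)) ≤ #A := by
  have hzero : B.image (0 * ·) ⊆ {0} := fun _ h => by
    obtain ⟨b, -, rfl⟩ := mem_image.1 h
    simp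
  calc collisionCount (fun p : K × K => p.1 + p.2) (A ×ˢ B.image (0 * ·))
      ≤ 1 * #(A ×ˢ B.image (0 * ·)) := by
        refine collisionCount_le_mul _ fun c => card_le_one.2 fun p hp q hq => ?_
        simp only [mem_filter, mem_product] at hp hq
        have hp2 := mem_singleton.1 (hzero hp.1.2)
        have hq2 := mem_singleton.1 (hzero hq.1.2)
        exact Prod.ext (by linear_combination hp.2 - hq.2 - hp2 + hq2) (hp2.trans hq2.symm)
    _ ≤ #A * 1 := by
        rw [one_mul, card_product]
        exact Nat.mul_le_mul_left _ ((card_le_card hzero).trans (card_singleton 0).le)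
    _ = #A := mul_one _

end Field

section Blocks

variable {α : Type*} [LinearOrder α]

/-- Blocks of `#A / r + 1` consecutive elements of `A`. -/
lemma exists_monotone_blocks (A : Finset α) {r : ℕ} (hr : 0 < r) (hrA : r ≤ #A) :
    ∃ u : α → ℕ, ∃ k, Monotone u ∧ (∀ t ∈ A, u t < r) ∧ (∀ i, #{t ∈ A | u t = i} ≤ k) ∧
      k * r ≤ 2 * #A := by
  set k := #A / r + 1 with hk_def
  have hk : 0 < k := Nat.succ_pos _
  set rank : α → ℕ := fun t => #{y ∈ A | y < t}
  have rank_mono : Monotone rank := fun t t' h =>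
    card_le_card (monotone_filter_right _ fun _ _ hy => hy.trans_le h)
  have rank_lt_rank : ∀ t ∈ A, ∀ t', t < t' → rank t < rank t' := by
    intro t ht t' htt'
    refine card_lt_card ((ssubset_iff_of_subset ?_).2 ⟨t, ?_, ?_⟩)
    · exact monotone_filter_right _ fun _ _ hy => hy.trans htt'
    · exact mem_filter.2 ⟨ht, htt'⟩
    · simp
  have rank_lt_card : ∀ t ∈ A, rank t < #A := fun t ht =>
    card_lt_card (filter_ssubset.2 ⟨t, ht, lt_irrefl t⟩)
  refine ⟨fun t => rank t / k, k, fun t t' h => Nat.div_le_div_right (rank_mono h),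
    fun t ht => ?_, fun i => ?_, ?_⟩
  · rw [Nat.div_lt_iff_lt_mul hk]
    calc rank t < #A := rank_lt_card t ht
      _ < #A / r * r + r := Nat.lt_div_mul_add hr
      _ = r * k := by rw [hk_def]; ring
  · calc #{t ∈ A | rank t / k = i} ≤ #(Ico (k * i) (k * i + k)) := by
          refine card_le_card_of_injOn rank (fun t ht => ?_) fun t ht t' ht' h => ?_
          · have := Nat.div_add_mod (rank t) k
            have := Nat.mod_lt (rank t) hk
            have hi := (mem_filter.1 ht).2
            simp only [coe_Ico, Set.mem_Ico]
            subst hi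
            omega
          · rcases lt_trichotomy t t' with htt' | htt' | htt'
            · exact absurd h (rank_lt_rank t (mem_filter.1 ht).1 t' htt').ne
            · exact htt'
            · exact absurd h (rank_lt_rank t' (mem_filter.1 ht').1 t htt').ne'
      _ = k := by simp
  · have := Nat.div_mul_le_self #A r
    rw [add_one_mul]
    omega

variable {s : Finset α} {f g : α → ℕ} {r : ℕ}

/-- The cells `(f t, g t)` form a chain in `[0, r)²`, on which `i + j` is injective. -/
lemma card_image_prod_le_of_monotoneOn (hf : MonotoneOn f s) (hg : MonotoneOn g s)
    (hfr : ∀ t ∈ s, f t < r) (hgr : ∀ t ∈ s, g t < r) :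
    #(s.image fun t => (f t, g t)) ≤ 2 * r := by
  calc #(s.image fun t => (f t, g t)) ≤ #(range (2 * r)) := by
        refine card_le_card_of_injOn (fun e => e.1 + e.2) (fun e he => ?_)
          fun e he e' he' h => ?_
        · obtain ⟨t, ht, rfl⟩ := mem_image.1 he
          have := hfr t ht
          have := hgr t ht
          simp only [coe_range, Set.mem_Iio]
          omega
        · obtain ⟨t, ht, rfl⟩ := mem_image.1 he
          obtain ⟨t', ht', rfl⟩ := mem_image.1 he'
          simp only at h
          rcases le_total t t' with htt' | htt'
          · have := hf ht ht' htt'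
            have := hg ht ht' htt'
            ext <;> simp only <;> omega
          · have := hf ht' ht htt'
            have := hg ht' ht htt'
            ext <;> simp only <;> omega
    _ = 2 * r := card_range _

/-- Here the cells are ordered oppositely in the two coordinates, so `i + (r - j)` is injective
on them. -/
lemma card_image_prod_le_of_antitoneOn (hf : AntitoneOn f s) (hg : MonotoneOn g s)
    (hfr : ∀ t ∈ s, f t < r) (hgr : ∀ t ∈ s, g t < r) :
    #(s.image fun t => (f t, g t)) ≤ 2 * r := by
  calc #(s.image fun t => (f t, g t)) ≤ #(range (2 * r)) := by
        refine card_le_card_of_injOn (fun e => e.1 + (r - e.2)) (fun e he => ?_)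
          fun e he e' he' h => ?_
        · obtain ⟨t, ht, rfl⟩ := mem_image.1 he
          have := hfr t ht
          simp only [coe_range, Set.mem_Iio]
          omega
        · obtain ⟨t, ht, rfl⟩ := mem_image.1 he
          obtain ⟨t', ht', rfl⟩ := mem_image.1 he'
          have := hgr t ht
          have := hgr t' ht'
          simp only at h
          rcases le_total t t' with htt' | htt'
          · have := hf ht ht' htt'
            have := hg ht ht' htt'
            ext <;> simp only <;> omega
          · have := hf ht' ht htt'
            have := hg ht' ht htt'
            ext <;> simp only <;> omega
    _ = 2 * r := card_range _

end Blocks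

lemma sum_le_sqrt_of_le_mul {ι : Type*} (S : Finset ι) (F : ι → ℕ) {m a b : ℕ}
    (hF : ∀ x ∈ S, F x ≤ m * (a * b)) (hm : #S * m * m ≤ a * b) :
    (∑ x ∈ S, F x : ℝ) ≤ √((a : ℝ) ^ 3 * b ^ 3 * #S) := by
  have hsum : ∑ x ∈ S, F x ≤ #S * (m * (a * b)) := by simpa using sum_le_card_nsmul S F _ hF
  have hsq : (#S * (m * (a * b))) ^ 2 ≤ a ^ 3 * b ^ 3 * #S :=
    calc (#S * (m * (a * b))) ^ 2 = #S * m * m * ((a * b) ^ 2 * #S) := by ring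
      _ ≤ a * b * ((a * b) ^ 2 * #S) := Nat.mul_le_mul_right _ hm
      _ = a ^ 3 * b ^ 3 * #S := by ring
  rw [Real.le_sqrt (by positivity) (by positivity)]
  calc (∑ x ∈ S, (F x : ℝ)) ^ 2 ≤ ((#S * (m * (a * b)) : ℕ) : ℝ) ^ 2 := by
        gcongr
        exact_mod_cast hsum
    _ ≤ (a : ℝ) ^ 3 * b ^ 3 * #S := by exact_mod_cast hsq

section Ordered

variable {K : Type*} [Field K] [LinearOrder K] [IsStrictOrderedRing K]
  {A B : Finset K} {u v : K → ℕ} {r : ℕ}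

/-- Along the line `a + x b = c`, `a` moves monotonically with `b`. -/
lemma card_image_prodMap_filter_add_mul_eq_le (x c : K) (hu : Monotone u) (hv : Monotone v)
    (huA : ∀ t ∈ A, u t < r) (hvB : ∀ t ∈ B, v t < r) :
    #({p ∈ A ×ˢ B | p.1 + x * p.2 = c}.image (Prod.map u v)) ≤ 2 * r := by
  set L := {p ∈ A ×ˢ B | p.1 + x * p.2 = c}
  have hL : ∀ p ∈ L, p.1 = c - x * p.2 ∧ p.1 ∈ A ∧ p.2 ∈ B := fun p hp => by
    obtain ⟨hAB, hc⟩ := mem_filter.1 hp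
    exact ⟨eq_sub_of_add_eq hc, (mem_product.1 hAB).1, (mem_product.1 hAB).2⟩
  have himage :
      L.image (Prod.map u v) = (L.image Prod.snd).image fun b => (u (c - x * b), v b) := by
    rw [image_image]
    exact image_congr fun p hp => by rw [Prod.map_apply, (hL p hp).1]; rfl
  have hbound : ∀ b ∈ L.image Prod.snd, u (c - x * b) < r ∧ v b < r := fun b hb => by
    obtain ⟨p, hp, rfl⟩ := mem_image.1 hb
    obtain ⟨h1, hA, hB⟩ := hL p hp
    exact ⟨h1 ▸ huA _ hA, hvB _ hB⟩
  rw [himage]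
  rcases le_or_gt x 0 with hx | hx
  · exact card_image_prod_le_of_monotoneOn (fun b _ b' _ h => hu (by nlinarith))
      (hv.monotoneOn _) (fun b hb => (hbound b hb).1) fun b hb => (hbound b hb).2
  · exact card_image_prod_le_of_antitoneOn (fun b _ b' _ h => hu (by nlinarith))
      (hv.monotoneOn _) (fun b hb => (hbound b hb).1) fun b hb => (hbound b hb).2

lemma lineEnergy_le_mul_sum_blocks (x : K) (hu : Monotone u) (hv : Monotone v)
    (huA : ∀ t ∈ A, u t < r) (hvB : ∀ t ∈ B, v t < r) :
    lineEnergy x A B ≤ 2 * r * ∑ i ∈ A.image u, ∑ j ∈ B.image v,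
      lineEnergy x {t ∈ A | u t = i} {t ∈ B | v t = j} := by
  have h := collisionCount_le_mul_sum (fun p : K × K => p.1 + x * p.2) (Prod.map u v) (A ×ˢ B)
    fun c => card_image_prodMap_filter_add_mul_eq_le x c hu hv huA hvB
  have hcell : ∀ e : ℕ × ℕ,
      {p ∈ A ×ˢ B | Prod.map u v p = e} = {t ∈ A | u t = e.1} ×ˢ {t ∈ B | v t = e.2} := by
    intro e
    rw [← filter_product]
    exact filter_congr fun p _ => Prod.ext_iff
  rw [prodMap_image_product, sum_product] at h
  simp only [hcell] at h
  exact h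

lemma sum_lineEnergy_le_of_blocks (S : Finset K) {k l : ℕ} (hu : Monotone u)
    (hv : Monotone v) (huA : ∀ t ∈ A, u t < r) (hvB : ∀ t ∈ B, v t < r)
    (hk : ∀ i, #{t ∈ A | u t = i} ≤ k) (hl : ∀ j, #{t ∈ B | v t = j} ≤ l) :
    ∑ x ∈ S, lineEnergy x A B ≤ 2 * r * (#S * (#A * #B) + k * #A * (l * #B)) := by
  set a : ℕ → ℕ := fun i => #{t ∈ A | u t = i}
  set b : ℕ → ℕ := fun j => #{t ∈ B | v t = j}
  have hsum_sq_a : ∑ i ∈ A.image u, a i ^ 2 ≤ k * #A :=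
    (collisionCount_eq_sum_sq u subset_rfl).symm.trans_le (collisionCount_le_mul u hk)
  have hsum_sq_b : ∑ j ∈ B.image v, b j ^ 2 ≤ l * #B :=
    (collisionCount_eq_sum_sq v subset_rfl).symm.trans_le (collisionCount_le_mul v hl)
  calc ∑ x ∈ S, lineEnergy x A B
      ≤ ∑ x ∈ S, 2 * r * ∑ i ∈ A.image u, ∑ j ∈ B.image v,
          lineEnergy x {t ∈ A | u t = i} {t ∈ B | v t = j} :=
        sum_le_sum fun x _ => lineEnergy_le_mul_sum_blocks x hu hv huA hvB
    _ = 2 * r * ∑ i ∈ A.image u, ∑ j ∈ B.image v, ∑ x ∈ S,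
          lineEnergy x {t ∈ A | u t = i} {t ∈ B | v t = j} := by
        rw [← mul_sum, sum_comm]
        exact congrArg _ (sum_congr rfl fun i _ => sum_comm)
    _ ≤ 2 * r * ∑ i ∈ A.image u, ∑ j ∈ B.image v, (#S * (a i * b j) + (a i * b j) ^ 2) := by
        gcongr with i _ j _
        simpa only [card_product] using sum_lineEnergy_le S _ _
    _ = 2 * r * (#S * ((∑ i ∈ A.image u, a i) * ∑ j ∈ B.image v, b j)
          + (∑ i ∈ A.image u, a i ^ 2) * ∑ j ∈ B.image v, b j ^ 2) := by
        congr 1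
        rw [sum_mul_sum, sum_mul_sum, mul_sum, ← sum_add_distrib]
        refine sum_congr rfl fun i _ => ?_
        rw [mul_sum, ← sum_add_distrib]
        exact sum_congr rfl fun j _ => by ring
    _ ≤ 2 * r * (#S * (#A * #B) + k * #A * (l * #B)) := by
        rw [← card_eq_sum_card_image, ← card_eq_sum_card_image]
        gcongr

lemma sum_lineEnergy_le_of_le_card (S : Finset K) (hr : 0 < r) (hrA : r ≤ #A)
    (hrB : r ≤ #B) :
    (∑ x ∈ S, lineEnergy x A B : ℝ) ≤ 2 * r * #S * (#A * #B) + 8 * (#A * #B) ^ 2 / r := by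
  obtain ⟨u, k, hu, huA, hk, hkr⟩ := exists_monotone_blocks A hr hrA
  obtain ⟨v, l, hv, hvB, hl, hlr⟩ := exists_monotone_blocks B hr hrB
  have h :
      (∑ x ∈ S, lineEnergy x A B : ℝ) ≤ 2 * r * (#S * (#A * #B) + k * #A * (l * #B)) := by
    exact_mod_cast sum_lineEnergy_le_of_blocks S hu hv huA hvB hk hl
  have hkr' : (k : ℝ) * r ≤ 2 * #A := by exact_mod_cast hkr
  have hlr' : (l : ℝ) * r ≤ 2 * #B := by exact_mod_cast hlr
  have hr' : (0 : ℝ) < r := by exact_mod_cast hr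
  have hcells : 2 * r * (k * #A * (l * #B) : ℝ) ≤ 8 * (#A * #B) ^ 2 / r := by
    rw [le_div_iff₀ hr']
    calc 2 * r * (k * #A * (l * #B) : ℝ) * r = 2 * (k * r) * (l * r) * (#A * #B) := by ring
      _ ≤ 2 * (2 * #A) * (2 * #B) * (#A * #B) := by gcongr
      _ = 8 * (#A * #B) ^ 2 := by ring
  linarith

/-- Take `r = ⌈√(#A #B / #S)⌉` blocks; the balance conditions ensure `r ≤ min #A #B`. -/
lemma sum_lineEnergy_le_of_balanced (S : Finset K) (hS0 : 0 < #S) (hS : #S ≤ #A * #B)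
    (hBA : #B ≤ #S * #A) (hAB : #A ≤ #S * #B) :
    (∑ x ∈ S, lineEnergy x A B : ℝ) ≤ 12 * √((#A : ℝ) ^ 3 * #B ^ 3 * #S) := by
  have ha : (0 : ℝ) < #A := by exact_mod_cast Nat.pos_of_mul_pos_right (hS0.trans_le hS)
  have hb : (0 : ℝ) < #B := by exact_mod_cast Nat.pos_of_mul_pos_left (hS0.trans_le hS)
  have hs : (0 : ℝ) < #S := by exact_mod_cast hS0
  obtain ⟨ρ, hρ⟩ : ∃ ρ, ρ = √((#A * #B : ℝ) / #S) := ⟨_, rfl⟩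
  have hρ_sq : ρ ^ 2 = #A * #B / #S := by rw [hρ]; exact Real.sq_sqrt (by positivity)
  have hρ1 : 1 ≤ ρ := hρ ▸ Real.one_le_sqrt.2 ((one_le_div hs).2 (by exact_mod_cast hS))
  have hρr : ρ ≤ ⌈ρ⌉₊ := Nat.le_ceil ρ
  have hrρ : (⌈ρ⌉₊ : ℝ) ≤ 2 * ρ := by linarith [Nat.ceil_lt_add_one (zero_le_one.trans hρ1)]
  have hrA : ⌈ρ⌉₊ ≤ #A := by
    refine Nat.ceil_le.2 (hρ ▸ (Real.sqrt_le_left ha.le).2 ((div_le_iff₀ hs).2 ?_))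
    have : (#B : ℝ) ≤ #S * #A := by exact_mod_cast hBA
    nlinarith
  have hrB : ⌈ρ⌉₊ ≤ #B := by
    refine Nat.ceil_le.2 (hρ ▸ (Real.sqrt_le_left hb.le).2 ((div_le_iff₀ hs).2 ?_))
    have : (#A : ℝ) ≤ #S * #B := by exact_mod_cast hAB
    nlinarith
  have hsqrt : √((#A : ℝ) ^ 3 * #B ^ 3 * #S) = #A * #B * #S * ρ := by
    rw [hρ, show (#A : ℝ) ^ 3 * #B ^ 3 * #S = (#A * #B * #S) ^ 2 * (#A * #B / #S) by
      field_simp, Real.sqrt_mul (by positivity), Real.sqrt_sq (by positivity)]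
  calc (∑ x ∈ S, lineEnergy x A B : ℝ)
      ≤ 2 * ⌈ρ⌉₊ * #S * (#A * #B) + 8 * (#A * #B) ^ 2 / ⌈ρ⌉₊ :=
        sum_lineEnergy_le_of_le_card S (Nat.ceil_pos.2 (by linarith)) hrA hrB
    _ ≤ 2 * (2 * ρ) * #S * (#A * #B) + 8 * (#A * #B) ^ 2 / ρ := by
        gcongr
    _ = 12 * √((#A : ℝ) ^ 3 * #B ^ 3 * #S) := by
        rw [hsqrt, show (#A * #B : ℝ) = ρ ^ 2 * #S by rw [hρ_sq]; field_simp]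
        field_simp
        ring

lemma sum_lineEnergy_le_sqrt {S : Finset K} (hS0 : (0 : K) ∉ S) (hS : #S ≤ #A * #B) :
    (∑ x ∈ S, lineEnergy x A B : ℝ) ≤ 12 * √((#A : ℝ) ^ 3 * #B ^ 3 * #S) := by
  have hle : √((#A : ℝ) ^ 3 * #B ^ 3 * #S) ≤ 12 * √((#A : ℝ) ^ 3 * #B ^ 3 * #S) := by
    linarith [Real.sqrt_nonneg ((#A : ℝ) ^ 3 * #B ^ 3 * #S)]
  rcases S.eq_empty_or_nonempty with rfl | hne
  · simp
  by_cases hBA : #B ≤ #S * #A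
  · by_cases hAB : #A ≤ #S * #B
    · exact sum_lineEnergy_le_of_balanced S hne.card_pos hS hBA hAB
    · refine (sum_le_sqrt_of_le_mul S _ (fun x _ => lineEnergy_le_card_right x A B) ?_).trans hle
      exact Nat.mul_le_mul_right _ (not_le.1 hAB).le
  · refine (sum_le_sqrt_of_le_mul S _
      (fun x hx => lineEnergy_le_card_left (ne_of_mem_of_not_mem hx hS0) A B) ?_).trans hle
    rw [mul_comm #A #B]
    exact Nat.mul_le_mul_right _ (not_le.1 hBA).le

lemma sum_energy_erase_zero_le (A B X : Finset K) (hX : #X ≤ #A * #B) :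
    ∑ x ∈ X.erase 0, (collisionCount (fun p : K × K => p.1 + p.2) (A ×ˢ B.image (x * ·)) : ℝ)
      ≤ 12 * √((#A : ℝ) ^ 3 * #B ^ 3 * #X) :=
  calc _ ≤ ∑ x ∈ X.erase 0, (lineEnergy x A B : ℝ) := by
        gcongr with x
        exact_mod_cast collisionCount_add_product_image_mul_le x A B
    _ ≤ 12 * √((#A : ℝ) ^ 3 * #B ^ 3 * #(X.erase 0)) :=
        sum_lineEnergy_le_sqrt (notMem_erase 0 X) ((card_le_card (erase_subset 0 X)).trans hX)
    _ ≤ 12 * √((#A : ℝ) ^ 3 * #B ^ 3 * #X) := by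
        gcongr
        exact erase_subset 0 X

end Ordered

lemma card_le_sqrt_of_card_le_mul {α : Type*} {A B X : Finset α} (hX0 : 0 < #X)
    (hX : #X ≤ #A * #B) : (#A : ℝ) ≤ √((#A : ℝ) ^ 3 * #B ^ 3 * #X) := by
  have hA : (1 : ℝ) ≤ #A := by exact_mod_cast Nat.pos_of_mul_pos_right (hX0.trans_le hX)
  have hB : (1 : ℝ) ≤ #B := by exact_mod_cast Nat.pos_of_mul_pos_left (hX0.trans_le hX)
  have hX1 : (1 : ℝ) ≤ #X := by exact_mod_cast hX0
  rw [Real.le_sqrt (by positivity) (by positivity)]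
  calc (#A : ℝ) ^ 2 = #A ^ 2 * (1 * (1 ^ 3 * 1)) := by ring
    _ ≤ (#A : ℝ) ^ 2 * (#A * (#B ^ 3 * #X)) := by gcongr
    _ = (#A : ℝ) ^ 3 * #B ^ 3 * #X := by ring

theorem stmt7 : ∃ C > (0:ℝ), ∀ A B X : Finset ℝ, X.card ≤ A.card * B.card →
    ∑ x ∈ X, ((((A ×ˢ (B.image (fun b => x * b))) ×ˢ
          (A ×ˢ (B.image (fun b => x * b)))).filter
        (fun q => q.1.1 + q.1.2 = q.2.1 + q.2.2)).card : ℝ) ≤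
      C * Real.sqrt ((A.card : ℝ)^3 * (B.card : ℝ)^3 * (X.card : ℝ)) := by
  refine ⟨13, by norm_num, fun A B X hX => ?_⟩
  change ∑ x ∈ X,
    (collisionCount (fun p : ℝ × ℝ => p.1 + p.2) (A ×ˢ B.image (x * ·)) : ℝ) ≤ _
  have hmain := sum_energy_erase_zero_le A B X hX
  have hsqrt := Real.sqrt_nonneg ((#A : ℝ) ^ 3 * #B ^ 3 * #X)
  by_cases h0 : (0 : ℝ) ∈ X
  · rw [← add_sum_erase X _ h0]
    have hzero :
        (collisionCount (fun p : ℝ × ℝ => p.1 + p.2) (A ×ˢ B.image (0 * ·)) : ℝ) ≤ #A := by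
      exact_mod_cast collisionCount_add_product_image_zero_mul_le A B
    linarith [card_le_sqrt_of_card_le_mul (card_pos.2 ⟨0, h0⟩) hX]
  · rw [erase_eq_of_notMem h0] at hmain
    linarith
end

section
/- For any finite set A of nonzero real numbers, there is a subset A' ⊆ A with |A'| ≥ |A|/2 such that for every a ∈ A', |A + aA| ≫ |A|^{3/2}, where aA = {ab : b ∈ A}. -/
/-!
For `a ∈ A` let `E_a` count the pairs `(p, p')` in `(A × A)²` with `p.1 + a p.2 = p'.1 + a p'.2`.
By Cauchy–Schwarz `|A|⁴ ≤ |A + aA| E_a`, so it suffices to show `∑_{a ∈ A} E_a ≪ |A|^{7/2}` and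
to discard the `a` whose `E_a` exceeds twice the average.

Cut `A` into about `√|A|` blocks of consecutive elements, and `A × A` into the resulting grid of
cells. For `a ≠ 0` the line `b + a c = x` is monotone, so it meets only `O(√|A|)` cells, and
Cauchy–Schwarz along the line bounds `E_a` by `O(√|A|)` times the number of such pairs lying in a
common cell. Two distinct points lie on a common line of slope `-1/a` for at most one `a`, so
summing over `a` the latter count is at most `|A|³ + ∑_cells |cell|² ≤ |A|³ + O(|A|) |A|²`.
-/

open Finset

namespace SumDilate

section Collisions

variable {ι β γ : Type*} [DecidableEq β] [DecidableEq γ]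

-- For `a ≠ 0`, `#(collisions (A ×ˢ A) fun p => p.1 + a * p.2)` is the additive energy of `A`
-- and `a • A`.
def collisions (s : Finset ι) (f : ι → β) : Finset (ι × ι) :=
  {pp ∈ s ×ˢ s | f pp.1 = f pp.2}

lemma card_collisions_prod (s : Finset ι) (f : ι → β) (g : ι → γ) :
    #(collisions s fun i => (f i, g i)) =
      ∑ x ∈ s.image f, #(collisions {i ∈ s | f i = x} g) := by
  rw [card_eq_sum_card_fiberwise (f := fun pp => f pp.1) (t := s.image f)]
  · refine sum_congr rfl fun x _ => congrArg card ?_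
    ext pp
    simp only [collisions, mem_filter, mem_product, Prod.ext_iff]
    grind
  · intro pp hpp
    simp only [collisions, mem_coe, mem_filter, mem_product] at hpp
    exact mem_image_of_mem f hpp.1.1

lemma card_collisions_eq_sum_sq (s : Finset ι) (f : ι → β) :
    #(collisions s f) = ∑ x ∈ s.image f, #{i ∈ s | f i = x} ^ 2 := by
  have h : collisions s f = collisions s fun i => (f i, ()) := by
    ext pp; simp [collisions]
  rw [h, card_collisions_prod]
  refine sum_congr rfl fun x _ => ?_
  rw [sq, ← card_product]
  congr 1
  ext pp; simp [collisions]

lemma sq_card_le_card_image_mul_card_collisions (s : Finset ι) (f : ι → β) :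
    #s ^ 2 ≤ #(s.image f) * #(collisions s f) := by
  rw [card_collisions_eq_sum_sq]
  conv_lhs => rw [card_eq_sum_card_image f s]
  exact sq_sum_le_card_mul_sum_sq

lemma sq_card_div_le_card_image {s : Finset ι} {f : ι → β} {T : ℝ} (hT : 0 < T)
    (h : (#(collisions s f) : ℝ) ≤ T) : (#s : ℝ) ^ 2 / T ≤ #(s.image f) := by
  rw [div_le_iff₀ hT]
  calc (#s : ℝ) ^ 2 ≤ #(s.image f) * #(collisions s f) := by
        exact_mod_cast sq_card_le_card_image_mul_card_collisions s f
    _ ≤ #(s.image f) * T := by gcongr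

lemma card_collisions_le_mul_card (s : Finset ι) (f : ι → β) {m : ℕ}
    (h : ∀ x ∈ s.image f, #{i ∈ s | f i = x} ≤ m) : #(collisions s f) ≤ m * #s := by
  rw [card_collisions_eq_sum_sq, card_eq_sum_card_image f s, mul_sum]
  gcongr with x hx
  rw [sq]
  exact Nat.mul_le_mul_right _ (h x hx)

lemma card_collisions_le_mul_card_collisions_prod (s : Finset ι) (f : ι → β) (g : ι → γ)
    {M : ℕ} (h : ∀ x ∈ s.image f, #({i ∈ s | f i = x}.image g) ≤ M) :
    #(collisions s f) ≤ M * #(collisions s fun i => (f i, g i)) := by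
  rw [card_collisions_eq_sum_sq, card_collisions_prod, mul_sum]
  gcongr with x hx
  exact (sq_card_le_card_image_mul_card_collisions _ g).trans
    (Nat.mul_le_mul_right _ (h x hx))

end Collisions

section Blocks

variable {α : Type*} [LinearOrder α] (A : Finset α) (q : ℕ)

def rank (x : α) : ℕ := #{y ∈ A | y < x}

def block (x : α) : ℕ := rank A x / q

def cell (p : α × α) : ℕ × ℕ := (block A q p.1, block A q p.2)

variable {A q}

lemma rank_mono : Monotone (rank A) := fun _ _ hxy =>
  card_le_card fun _ hz => by
    simp only [mem_filter] at hz ⊢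
    exact ⟨hz.1, hz.2.trans_le hxy⟩

lemma rank_strictMonoOn : StrictMonoOn (rank A) A := by
  intro x hx y _ hxy
  refine card_lt_card ((ssubset_iff_of_subset ?_).2 ⟨x, ?_, ?_⟩)
  · intro z hz
    simp only [mem_filter] at hz ⊢
    exact ⟨hz.1, hz.2.trans hxy⟩
  · simp [mem_coe.1 hx, hxy]
  · simp

lemma rank_lt_card {x : α} (hx : x ∈ A) : rank A x < #A :=
  card_lt_card (filter_ssubset.2 ⟨x, hx, lt_irrefl x⟩)

lemma block_mono : Monotone (block A q) := fun _ _ hxy => Nat.div_le_div_right (rank_mono hxy)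

lemma block_lt {x : α} {k : ℕ} (hx : x ∈ A) (hA : #A ≤ q * k) : block A q x < k := by
  have hrank := rank_lt_card hx
  have hq : 0 < q := Nat.pos_of_ne_zero fun hq => by rw [hq, zero_mul] at hA; omega
  exact (Nat.div_lt_iff_lt_mul hq).2 (by rw [mul_comm]; omega)

lemma card_block_le (hq : 0 < q) (i : ℕ) : #{x ∈ A | block A q x = i} ≤ q := by
  calc #{x ∈ A | block A q x = i} ≤ #(Ico (q * i) (q * i + q)) := by
        refine card_le_card_of_injOn (rank A) (fun x hx => ?_) ?_
        · rw [mem_coe, mem_filter, block] at hx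
          have hdiv := Nat.div_add_mod (rank A x) q
          rw [hx.2] at hdiv
          have := Nat.mod_lt (rank A x) hq
          rw [coe_Ico, Set.mem_Ico]
          omega
        · exact rank_strictMonoOn.injOn.mono (filter_subset _ _)
    _ = q := by simp

lemma card_filter_cell_eq_le (hq : 0 < q) (c : ℕ × ℕ) :
    #{p ∈ A ×ˢ A | cell A q p = c} ≤ q ^ 2 := by
  calc #{p ∈ A ×ˢ A | cell A q p = c}
      ≤ #({x ∈ A | block A q x = c.1} ×ˢ {x ∈ A | block A q x = c.2}) := by
        refine card_le_card fun p hp => ?_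
        simp only [mem_filter, mem_product, cell, Prod.ext_iff] at hp ⊢
        tauto
    _ ≤ q ^ 2 := by
        rw [card_product, sq]
        exact Nat.mul_le_mul (card_block_le hq _) (card_block_le hq _)

end Blocks

lemma card_le_of_monotone_staircase {S : Finset (ℕ × ℕ)} {m : ℕ}
    (hS : ∀ c ∈ S, c.1 ≤ m ∧ c.2 ≤ m) (hmono : ∀ c ∈ S, ∀ d ∈ S, c.1 < d.1 → c.2 ≤ d.2) :
    #S ≤ 2 * m + 1 := by
  calc #S ≤ #(range (2 * m + 1)) := by
        refine card_le_card_of_injOn (fun c => c.1 + c.2) (fun c hc => ?_) fun c hc d hd hcd => ?_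
        · have := hS c hc
          simp only [coe_range, Set.mem_Iio]
          omega
        · have := hmono c hc d hd
          have := hmono d hd c hc
          simp only at hcd
          ext <;> omega
    _ = 2 * m + 1 := card_range _

lemma card_le_of_antitone_staircase {S : Finset (ℕ × ℕ)} {m : ℕ}
    (hS : ∀ c ∈ S, c.1 ≤ m ∧ c.2 ≤ m) (hanti : ∀ c ∈ S, ∀ d ∈ S, c.1 < d.1 → d.2 ≤ c.2) :
    #S ≤ 2 * m + 1 := by
  calc #S ≤ #(range (2 * m + 1)) := by
        refine card_le_card_of_injOn (fun c => c.1 + (m - c.2)) (fun c hc => ?_)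
          fun c hc d hd hcd => ?_
        · have := hS c hc
          simp only [coe_range, Set.mem_Iio]
          omega
        · have := hS c hc
          have := hS d hd
          have := hanti c hc d hd
          have := hanti d hd c hc
          simp only at hcd
          ext <;> omega
    _ = 2 * m + 1 := card_range _

lemma card_filter_line_eq_le_one {R : Type*} [CommRing R] [NoZeroDivisors R] [DecidableEq R]
    (A : Finset R) {p p' : R × R} (hpp : p ≠ p') :
    #{a ∈ A | p.1 + a * p.2 = p'.1 + a * p'.2} ≤ 1 := by
  refine card_le_one.2 fun a ha b hb => ?_
  rw [mem_filter] at ha hb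
  have h2 : p.2 ≠ p'.2 := fun h => hpp (Prod.ext (by rw [h] at ha; exact add_right_cancel ha.2) h)
  have : (a - b) * (p.2 - p'.2) = 0 := by linear_combination ha.2 - hb.2
  exact sub_eq_zero.1 ((mul_eq_zero.1 this).resolve_right (sub_ne_zero.2 h2))

section OrderedRing

variable {R : Type*} [CommRing R] [LinearOrder R] [IsStrictOrderedRing R]

lemma card_image_cell_filter_line_le {A : Finset R} {q m : ℕ} (hA : #A ≤ q * (m + 1)) {a : R}
    (ha : a ≠ 0) (x : R) :
    #({p ∈ A ×ˢ A | p.1 + a * p.2 = x}.image (cell A q)) ≤ 2 * m + 1 := by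
  set L := {p ∈ A ×ˢ A | p.1 + a * p.2 = x}
  have hS : ∀ c ∈ L.image (cell A q), c.1 ≤ m ∧ c.2 ≤ m := by
    simp only [L, mem_image, mem_filter, mem_product]
    rintro _ ⟨p, ⟨⟨h1, h2⟩, -⟩, rfl⟩
    exact ⟨Nat.le_of_lt_succ (block_lt h1 hA), Nat.le_of_lt_succ (block_lt h2 hA)⟩
  have hline : ∀ p ∈ L, ∀ p' ∈ L, (cell A q p).1 < (cell A q p').1 → a * (p'.2 - p.2) < 0 := by
    intro p hp p' hp' hlt
    rw [mem_filter] at hp hp'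
    have h1 := block_mono.reflect_lt hlt
    linear_combination hp'.2 - hp.2 + h1
  rcases ha.lt_or_gt with hneg | hpos
  · refine card_le_of_monotone_staircase hS ?_
    simp only [forall_mem_image]
    intro p hp p' hp' hlt
    exact block_mono (sub_nonneg.1 (nonneg_of_mul_nonpos_right (hline p hp p' hp' hlt).le hneg))
  · refine card_le_of_antitone_staircase hS ?_
    simp only [forall_mem_image]
    intro p hp p' hp' hlt
    exact block_mono (sub_nonpos.1 (nonpos_of_mul_nonpos_right (hline p hp p' hp' hlt).le hpos))

lemma sum_card_collisions_line_cell_le (A : Finset R) {q : ℕ} (hq : 0 < q) :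
    ∑ a ∈ A, #(collisions (A ×ˢ A) fun p => (p.1 + a * p.2, cell A q p)) ≤
      #A ^ 3 + q ^ 2 * #A ^ 2 := by
  set P := collisions (A ×ˢ A) (cell A q)
  have hP : ∀ a : R, (collisions (A ×ˢ A) fun p => (p.1 + a * p.2, cell A q p)) =
      {pp ∈ P | pp.1.1 + a * pp.1.2 = pp.2.1 + a * pp.2.2} := by
    intro a
    ext pp
    simp only [P, collisions, mem_filter, Prod.ext_iff]
    tauto
  calc ∑ a ∈ A, #(collisions (A ×ˢ A) fun p => (p.1 + a * p.2, cell A q p))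
      = ∑ pp ∈ P, #{a ∈ A | pp.1.1 + a * pp.1.2 = pp.2.1 + a * pp.2.2} := by
        simp only [hP, card_filter]
        exact sum_comm
    _ ≤ ∑ pp ∈ P, (#A * (if pp.1 = pp.2 then 1 else 0) + 1) := by
        gcongr with pp
        split_ifs with h
        · exact (card_filter_le A _).trans (Nat.le_succ_of_le (by simp))
        · simpa using card_filter_line_eq_le_one A h
    _ = #A * #{pp ∈ P | pp.1 = pp.2} + #P := by
        rw [sum_add_distrib, ← mul_sum, ← card_filter, sum_const, smul_eq_mul, mul_one]
    _ ≤ #A * #A ^ 2 + q ^ 2 * #A ^ 2 := by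
        gcongr
        · calc #{pp ∈ P | pp.1 = pp.2} ≤ #(A ×ˢ A).diag := by
                refine card_le_card fun pp hpp => ?_
                simp only [P, collisions, mem_filter, mem_product, mem_diag] at hpp ⊢
                exact ⟨hpp.1.1.1, hpp.2⟩
            _ = #A ^ 2 := by rw [diag_card, card_product, sq]
        · calc #P ≤ q ^ 2 * #(A ×ˢ A) :=
                card_collisions_le_mul_card _ _ fun c _ => card_filter_cell_eq_le hq c
            _ = q ^ 2 * #A ^ 2 := by rw [card_product, sq #A]
    _ = #A ^ 3 + q ^ 2 * #A ^ 2 := by ring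

lemma sum_card_collisions_line_le {A : Finset R} (h0 : (0 : R) ∉ A) :
    ∑ a ∈ A, #(collisions (A ×ˢ A) fun p => p.1 + a * p.2) ≤ 15 * Nat.sqrt #A * #A ^ 3 := by
  set n := #A
  set s := Nat.sqrt n
  have hA : n ≤ (s + 1) * (s + 1) := (Nat.lt_succ_sqrt n).le
  calc ∑ a ∈ A, #(collisions (A ×ˢ A) fun p => p.1 + a * p.2)
      ≤ ∑ a ∈ A, (2 * s + 1) *
          #(collisions (A ×ˢ A) fun p => (p.1 + a * p.2, cell A (s + 1) p)) := by
        gcongr with a ha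
        exact card_collisions_le_mul_card_collisions_prod _ _ _ fun x _ =>
          card_image_cell_filter_line_le hA (ne_of_mem_of_not_mem ha h0) x
    _ ≤ (2 * s + 1) * (n ^ 3 + (s + 1) ^ 2 * n ^ 2) := by
        rw [← mul_sum]
        gcongr
        exact sum_card_collisions_line_cell_le A s.succ_pos
    _ ≤ 15 * s * n ^ 3 := by
        rcases Nat.eq_zero_or_pos n with hn | hn
        · simp [s, hn]
        have hs : 1 ≤ s := Nat.sqrt_pos.2 hn
        have hss : s * s ≤ n := Nat.sqrt_le n
        calc (2 * s + 1) * (n ^ 3 + (s + 1) ^ 2 * n ^ 2)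
            ≤ (3 * s) * (n ^ 3 + (4 * n) * n ^ 2) := by gcongr <;> nlinarith
          _ = 15 * s * n ^ 3 := by ring

end OrderedRing

lemma half_card_le_card_filter_le {ι : Type*} (A : Finset ι) {f : ι → ℝ} {T : ℝ} (hT : 0 < T)
    (hf : ∀ a ∈ A, 0 ≤ f a) (hsum : ∑ a ∈ A, f a ≤ #A * T / 2) :
    (#A : ℝ) / 2 ≤ #{a ∈ A | f a ≤ T} := by
  have hbad : (#{a ∈ A | ¬f a ≤ T} : ℝ) * T ≤ (#A / 2) * T := calc
    _ = ∑ _ ∈ {a ∈ A | ¬f a ≤ T}, T := by rw [sum_const, nsmul_eq_mul]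
    _ ≤ ∑ a ∈ {a ∈ A | ¬f a ≤ T}, f a :=
        sum_le_sum fun a ha => (not_le.1 (mem_filter.1 ha).2).le
    _ ≤ ∑ a ∈ A, f a := sum_le_sum_of_subset_of_nonneg (filter_subset _ _) fun a ha _ => hf a ha
    _ ≤ _ := hsum.trans_eq (by ring)
  have hsplit : (#{a ∈ A | f a ≤ T} : ℝ) + #{a ∈ A | ¬f a ≤ T} = #A := by
    exact_mod_cast card_filter_add_card_filter_not _
  linarith [le_of_mul_le_mul_right hbad hT]

end SumDilate

open Finset SumDilate

theorem stmt14 : ∃ c > (0:ℝ), ∀ A : Finset ℝ, (0:ℝ) ∉ A →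
    ∃ A' ⊆ A, (A.card : ℝ) / 2 ≤ (A'.card : ℝ) ∧ ∀ a ∈ A',
      c * Real.sqrt ((A.card : ℝ)^3) ≤
        (((A ×ˢ A).image (fun p => p.1 + a * p.2)).card : ℝ) := by
  refine ⟨1 / 30, by norm_num, fun A h0 => ?_⟩
  obtain ⟨r, hr, hn⟩ : ∃ r : ℝ, 0 ≤ r ∧ (#A : ℝ) = r ^ 2 :=
    ⟨_, Real.sqrt_nonneg _, (Real.sq_sqrt (Nat.cast_nonneg _)).symm⟩
  let E (a : ℝ) : ℝ := #(collisions (A ×ˢ A) fun p => p.1 + a * p.2)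
  refine ⟨{a ∈ A | E a ≤ 30 * r ^ 5}, filter_subset _ _, ?_, fun a ha => ?_⟩
  · rcases hr.eq_or_lt with rfl | hrpos
    · simp [hn]
    refine half_card_le_card_filter_le A (by positivity) (fun a _ => Nat.cast_nonneg _) ?_
    calc ∑ a ∈ A, E a ≤ 15 * Nat.sqrt #A * #A ^ 3 := by
          simp only [E]
          exact_mod_cast sum_card_collisions_line_le h0
      _ ≤ 15 * r * (r ^ 2) ^ 3 := by
          rw [← hn]
          gcongr
          simpa [hn, hr] using Real.nat_sqrt_le_real_sqrt (a := #A)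
      _ = #A * (30 * r ^ 5) / 2 := by rw [hn]; ring
  · rcases hr.eq_or_lt with rfl | hrpos
    · simp [hn]
    calc 1 / 30 * √((#A : ℝ) ^ 3) = (#(A ×ˢ A) : ℝ) ^ 2 / (30 * r ^ 5) := by
          rw [card_product, Nat.cast_mul, hn, show (r ^ 2) ^ 3 = (r ^ 3) ^ 2 by ring,
            Real.sqrt_sq (by positivity)]
          field_simp
      _ ≤ _ := sq_card_div_le_card_image (by positivity) (mem_filter.1 ha).2
end

section
/- Let A be a finite subset of an abelian group. Then E⁺(A+A) ≥ |A|² · max{|A−A|, |A+A|}, where E⁺(S) denotes the additive energy of the set S = A+A. -/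
/-!
Fix a representation `x = a₀ - b₀` of each `x ∈ A - A`. Then `(x, a, b) ↦ (a₀ + a, b₀ + b, b₀ + a, a₀ + b)`
injects `(A - A) × B × B` into the additive quadruples of `A + B`, since `x` is the difference of the
first and third entries. Likewise, with `x = a₀ + b₀` for `x ∈ A + B`, the map
`(x, a, b) ↦ (a₀ + b, b₀ + a, a + b, x)` injects `(A + B) × A × B`. Take `B = A`.
-/

open Finset Pointwise

section

variable {G : Type*} [AddCommGroup G] [DecidableEq G]

def additiveQuadruples (S : Finset G) : Finset (G × G × G × G) :=
  (S ×ˢ S ×ˢ S ×ˢ S).filter (fun q => q.1 + q.2.1 = q.2.2.1 + q.2.2.2)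

lemma mem_additiveQuadruples {S : Finset G} {a b c d : G} :
    (a, b, c, d) ∈ additiveQuadruples S ↔
      (a ∈ S ∧ b ∈ S ∧ c ∈ S ∧ d ∈ S) ∧ a + b = c + d := by
  simp only [additiveQuadruples, mem_filter, mem_product]

theorem card_sq_mul_card_sub_le_card_additiveQuadruples_add (A B : Finset G) :
    #B ^ 2 * #(A - A) ≤ #(additiveQuadruples (A + B)) := by
  choose! p hp q hq hpq using fun x (hx : x ∈ A - A) => mem_sub.1 hx
  calc #B ^ 2 * #(A - A) = #((A - A) ×ˢ B ×ˢ B) := by simp only [card_product]; ring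
    _ ≤ _ := card_le_card_of_injOn
        (fun t => (p t.1 + t.2.1, q t.1 + t.2.2, q t.1 + t.2.1, p t.1 + t.2.2)) ?_ ?_
  · rintro ⟨x, a, b⟩ ht
    obtain ⟨hx, ha, hb⟩ := by simpa only [mem_coe, mem_product] using ht
    dsimp only
    exact mem_additiveQuadruples.2 ⟨⟨add_mem_add (hp x hx) ha, add_mem_add (hq x hx) hb,
      add_mem_add (hq x hx) ha, add_mem_add (hp x hx) hb⟩, by abel⟩
  · rintro ⟨x, a, b⟩ ht ⟨x', a', b'⟩ ht' h
    have hx : x ∈ A - A := (mem_product.1 ht).1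
    have hx' : x' ∈ A - A := (mem_product.1 ht').1
    obtain ⟨h₁, h₂, h₃, -⟩ := by simpa only [Prod.mk.injEq] using h
    have hxx' : x = x' := by
      rw [← hpq x hx, ← hpq x' hx', ← add_sub_add_right_eq_sub (p x) (q x) a, h₁, h₃,
        add_sub_add_right_eq_sub]
    subst hxx'
    rw [add_left_cancel h₁, add_left_cancel h₂]

theorem card_mul_card_mul_card_add_le_card_additiveQuadruples_add (A B : Finset G) :
    #A * #B * #(A + B) ≤ #(additiveQuadruples (A + B)) := by
  choose! p hp q hq hpq using fun x (hx : x ∈ A + B) => mem_add.1 hx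
  calc #A * #B * #(A + B) = #((A + B) ×ˢ A ×ˢ B) := by simp only [card_product]; ring
    _ ≤ _ := card_le_card_of_injOn
        (fun t => (p t.1 + t.2.2, q t.1 + t.2.1, t.2.1 + t.2.2, t.1)) ?_ ?_
  · rintro ⟨x, a, b⟩ ht
    obtain ⟨hx, ha, hb⟩ := by simpa only [mem_coe, mem_product] using ht
    dsimp only
    refine mem_additiveQuadruples.2 ⟨⟨add_mem_add (hp x hx) hb, ?_, add_mem_add ha hb, hx⟩, ?_⟩
    · rw [add_comm (q x)]; exact add_mem_add ha (hq x hx)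
    · conv_rhs => rw [← hpq x hx]
      abel
  · rintro ⟨x, a, b⟩ - ⟨x', a', b'⟩ - h
    obtain ⟨h₁, h₂, -, rfl⟩ := by simpa only [Prod.mk.injEq] using h
    rw [add_left_cancel h₁, add_left_cancel h₂]

end

theorem stmt16 {G : Type*} [AddCommGroup G] [DecidableEq G] (A : Finset G) :
    A.card^2 * max (A - A).card (A + A).card ≤
      (((A + A) ×ˢ (A + A) ×ˢ (A + A) ×ˢ (A + A)).filter
        (fun q => q.1 + q.2.1 = q.2.2.1 + q.2.2.2)).card := by
  rw [mul_max]
  refine max_le (card_sq_mul_card_sub_le_card_additiveQuadruples_add A A) ?_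
  rw [sq]
  exact card_mul_card_mul_card_add_le_card_additiveQuadruples_add A A
end

section
/- Let A be a finite subset of an abelian group. Then E⁺(A−A) ≥ |A−A|^{−1} · |A² − Δ(A)|² ≥ |A|² |A−A|, where A² − Δ(A) = {(a1 − a, a2 − a) : a, a1, a2 ∈ A} ⊆ G × G. -/
/-!
Write `D = A - A` and `S = A² - Δ(A)`. Every difference `d = a₂ - a ∈ D` is the second
coordinate of the `|A|` points `(a₁ - a, d)` of `S`, so `|A| |D| ≤ |S|`. The map
`(x, y) ↦ (x, -y)` embeds `S` into the pairs `(x, y) ∈ D × D` with `x + y ∈ D`, and by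
Cauchy–Schwarz the square of their number is at most `|D| E⁺(D)`.
-/

open Finset Pointwise

namespace Finset

variable {G : Type*} [AddCommGroup G] [DecidableEq G]

lemma mem_product_sub_diag {A : Finset G} {p : G × G} :
    p ∈ A ×ˢ A - A.image (fun a => (a, a)) ↔
      ∃ a₁ ∈ A, ∃ a₂ ∈ A, ∃ a ∈ A, (a₁ - a, a₂ - a) = p := by
  rw [mem_sub]
  constructor
  · rintro ⟨u, hu, _, hv, rfl⟩
    obtain ⟨a, ha, rfl⟩ := mem_image.1 hv
    exact ⟨u.1, (mem_product.1 hu).1, u.2, (mem_product.1 hu).2, a, ha, rfl⟩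
  · rintro ⟨a₁, h₁, a₂, h₂, a, ha, rfl⟩
    exact ⟨(a₁, a₂), mem_product.2 ⟨h₁, h₂⟩, (a, a), mem_image_of_mem _ ha, rfl⟩

lemma card_mul_card_sub_le_card_product_sub_diag (A : Finset G) :
    #A * #(A - A) ≤ #(A ×ˢ A - A.image (fun a => (a, a))) := by
  refine mul_card_image_le_card_of_maps_to (f := Prod.snd) ?_ _ ?_
  · intro p hp
    obtain ⟨a₁, -, a₂, h₂, a, ha, rfl⟩ := mem_product_sub_diag.1 hp
    exact sub_mem_sub h₂ ha
  · intro d hd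
    obtain ⟨a₂, h₂, a, ha, rfl⟩ := mem_sub.1 hd
    rw [← card_image_of_injective A (fun x y h => by simpa using congrArg Prod.fst h :
      Function.Injective fun a₁ => (a₁ - a, a₂ - a))]
    refine card_le_card fun p hp => ?_
    obtain ⟨a₁, h₁, rfl⟩ := mem_image.1 hp
    exact mem_filter.2 ⟨mem_product_sub_diag.2 ⟨a₁, h₁, a₂, h₂, a, ha, rfl⟩, rfl⟩

lemma card_product_sub_diag_le_card_filter_add_mem (A : Finset G) :
    #(A ×ˢ A - A.image (fun a => (a, a))) ≤
      #{p ∈ (A - A) ×ˢ (A - A) | p.1 + p.2 ∈ A - A} := by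
  refine card_le_card_of_injOn (fun p => (p.1, -p.2)) (fun p hp => ?_)
    (fun p _ q _ h => by simpa [Prod.ext_iff] using h)
  obtain ⟨a₁, h₁, a₂, h₂, a, ha, rfl⟩ := mem_product_sub_diag.1 (mem_coe.1 hp)
  refine mem_filter.2 ⟨mem_product.2 ⟨sub_mem_sub h₁ ha, ?_⟩, ?_⟩
  · simpa using sub_mem_sub ha h₂
  · simpa using sub_mem_sub h₁ h₂

lemma addEnergy_eq_card_filter_add_eq_add (s : Finset G) :
    addEnergy s s = #{q ∈ s ×ˢ s ×ˢ s ×ˢ s | q.1 + q.2.1 = q.2.2.1 + q.2.2.2} := by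
  rw [addEnergy_eq_card_filter]
  exact card_equiv (Equiv.prodAssoc G G (G × G)) (by simp [and_assoc])

end Finset

lemma sq_mul_le_sq_div_and_sq_div_le {a d s e : ℝ} (ha : 0 ≤ a) (hd : 0 ≤ d) (he : 0 ≤ e)
    (has : a * d ≤ s) (hse : s ^ 2 ≤ d * e) : a ^ 2 * d ≤ s ^ 2 / d ∧ s ^ 2 / d ≤ e := by
  rcases hd.eq_or_lt with rfl | hd
  · simpa using he
  refine ⟨(le_div_iff₀ hd).2 ?_, (div_le_iff₀ hd).2 (by linarith)⟩
  nlinarith [mul_nonneg ha hd.le]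

theorem stmt17 {G : Type*} [AddCommGroup G] [DecidableEq G] (A : Finset G) :
    (A.card : ℝ)^2 * ((A - A).card : ℝ) ≤
      ((((A ×ˢ A) - A.image (fun a => (a, a))).card : ℝ))^2 / ((A - A).card : ℝ) ∧
    ((((A ×ˢ A) - A.image (fun a => (a, a))).card : ℝ))^2 / ((A - A).card : ℝ) ≤
      ((((A - A) ×ˢ (A - A) ×ˢ (A - A) ×ˢ (A - A)).filter
        (fun q => q.1 + q.2.1 = q.2.2.1 + q.2.2.2)).card : ℝ) := by
  have hlower : (#A * #(A - A) : ℝ) ≤ #(A ×ˢ A - A.image (fun a => (a, a))) := by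
    exact_mod_cast card_mul_card_sub_le_card_product_sub_diag A
  have hupper : (#(A ×ˢ A - A.image (fun a => (a, a))) : ℝ) ^ 2 ≤
      #(A - A) * #{q ∈ (A - A) ×ˢ (A - A) ×ˢ (A - A) ×ˢ (A - A) |
        q.1 + q.2.1 = q.2.2.1 + q.2.2.2} := by
    rw [← addEnergy_eq_card_filter_add_eq_add]
    exact_mod_cast (Nat.pow_le_pow_left (card_product_sub_diag_le_card_filter_add_mem A) 2).trans
      (card_sq_le_card_mul_addEnergy _ _ _)
  exact sq_mul_le_sq_div_and_sq_div_le (by positivity) (by positivity) (by positivity)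
    hlower hupper
end

section
/- Let A be a subset of an abelian group, P* ⊆ A − A, and suppose Σ_{s ∈ P*} |A_s| = η|A|² for some η ∈ (0,1], where A_s = A ∩ (A − s). Then Σ_{s ∈ P*} |A + A_s| ≥ η²|A|⁶ / E₃⁺(A), where E₃⁺(A) = Σ_x r_{A−A}(x)³. -/
/-! For each shift `s`, Cauchy–Schwarz over the sums `a + b` (`a ∈ A`, `b ∈ A_s`) gives
`(|A| |A_s|)² ≤ |A + A_s| · E(A, A_s)`, and a second Cauchy–Schwarz over `s ∈ P` gives
`(∑ₛ |A| |A_s|)² ≤ (∑ₛ |A + A_s|) · ∑ₛ E(A, A_s)`. The left side is `(η |A|³)²`, and the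
energies `E(A, A_s)` for the various shifts embed jointly into the triples counted by `E₃⁺(A)`. -/

open Finset Pointwise
open scoped Combinatorics.Additive

namespace Finset

variable {G : Type*} [AddCommGroup G] [DecidableEq G]

/-- `E₃⁺(A) = ∑ₓ r_{A-A}(x)³`, counted as the triples of pairs of `A` with a common difference. -/
def addEnergy₃ (A : Finset G) : ℕ :=
  #{q ∈ (A ×ˢ A) ×ˢ (A ×ˢ A) ×ˢ (A ×ˢ A) |
    q.1.1 - q.1.2 = q.2.1.1 - q.2.1.2 ∧ q.1.1 - q.1.2 = q.2.2.1 - q.2.2.2}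

lemma mem_inter_image_sub_iff {A : Finset G} {s b : G} :
    b ∈ A ∩ A.image (· - s) ↔ b ∈ A ∧ b + s ∈ A := by
  simp [sub_eq_iff_eq_add]

/-- The solution `a₁ + b₁ = a₂ + b₂` counted by `E(A, A_s)` is sent to the three pairs
`(a₁, a₂), (b₂, b₁), (b₂ + s, b₁ + s)`, from which `s` can be read off. -/
lemma sum_addEnergy_inter_image_sub_le (A P : Finset G) :
    ∑ s ∈ P, E[A, A ∩ A.image (· - s)] ≤ addEnergy₃ A := by
  simp_rw [addEnergy₃, addEnergy, ← card_sigma]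
  refine card_le_card_of_injOn
    (fun x => ((x.2.1.1, x.2.1.2), (x.2.2.2, x.2.2.1), (x.2.2.2 + x.1, x.2.2.1 + x.1))) ?_ ?_
  · rintro ⟨s, ⟨a₁, a₂⟩, b₁, b₂⟩ hx
    simp only [coe_sigma, Set.mem_sigma_iff, mem_coe, mem_filter, mem_product,
      mem_inter_image_sub_iff] at hx
    obtain ⟨-, ⟨⟨ha₁, ha₂⟩, ⟨hb₁, hb₁s⟩, hb₂, hb₂s⟩, hsum⟩ := hx
    simp only [mem_coe, mem_filter, mem_product]
    have hdiff : a₁ - a₂ = b₂ - b₁ := by rw [sub_eq_sub_iff_add_eq_add, hsum, add_comm]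
    exact ⟨⟨⟨ha₁, ha₂⟩, ⟨hb₂, hb₁⟩, hb₂s, hb₁s⟩, hdiff,
      hdiff.trans (add_sub_add_right_eq_sub ..).symm⟩
  · rintro ⟨s, ⟨a₁, a₂⟩, b₁, b₂⟩ - ⟨t, ⟨a₁', a₂'⟩, b₁', b₂'⟩ - h
    simp only [Prod.mk.injEq] at h
    obtain ⟨⟨rfl, rfl⟩, ⟨rfl, rfl⟩, hst, -⟩ := h
    obtain rfl : s = t := add_left_cancel hst
    rfl

lemma sq_sum_card_mul_card_inter_image_sub_le (A P : Finset G) :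
    (∑ s ∈ P, #A * #(A ∩ A.image (· - s))) ^ 2 ≤
      (∑ s ∈ P, #(A + A ∩ A.image (· - s))) * addEnergy₃ A :=
  calc
    _ ≤ (∑ s ∈ P, #(A + A ∩ A.image (· - s))) * ∑ s ∈ P, E[A, A ∩ A.image (· - s)] :=
      sum_sq_le_sum_mul_sum_of_sq_le_mul P (fun _ _ => Nat.zero_le _) (fun _ _ => Nat.zero_le _)
        fun _ _ => (mul_pow _ _ 2).trans_le (le_card_add_mul_addEnergy _ _)
    _ ≤ _ := Nat.mul_le_mul_left _ (sum_addEnergy_inter_image_sub_le A P)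

end Finset

theorem stmt19_general {G : Type*} [AddCommGroup G] [DecidableEq G] (A P : Finset G)
    (η : ℝ)
    (hsum : (∑ s ∈ P, ((A ∩ A.image (fun a => a - s)).card : ℝ)) = η * (A.card : ℝ)^2) :
    η^2 * (A.card : ℝ)^6 /
        (((((A ×ˢ A) ×ˢ (A ×ˢ A) ×ˢ (A ×ˢ A)).filter
          (fun q => q.1.1 - q.1.2 = q.2.1.1 - q.2.1.2 ∧
            q.1.1 - q.1.2 = q.2.2.1 - q.2.2.2)).card : ℝ)) ≤
      ∑ s ∈ P, ((A + (A ∩ A.image (fun a => a - s))).card : ℝ) := by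
  have hmass : (∑ s ∈ P, #A * #(A ∩ A.image (· - s)) : ℝ) = η * #A ^ 3 := by
    rw [← mul_sum, hsum]
    ring
  have hkey : η ^ 2 * #A ^ 6 ≤ (∑ s ∈ P, (#(A + A ∩ A.image (· - s)) : ℝ)) * addEnergy₃ A :=
    calc
      η ^ 2 * (#A : ℝ) ^ 6 = (∑ s ∈ P, #A * #(A ∩ A.image (· - s)) : ℝ) ^ 2 := by
        rw [hmass]; ring
      _ ≤ _ := by exact_mod_cast sq_sum_card_mul_card_inter_image_sub_le A P
  exact div_le_of_le_mul₀ (Nat.cast_nonneg _) (sum_nonneg fun _ _ => Nat.cast_nonneg _) hkey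

theorem stmt19 {G : Type*} [AddCommGroup G] [DecidableEq G] (A P : Finset G)
    (hP : P ⊆ A - A) (η : ℝ) (hη : 0 < η) (hη1 : η ≤ 1)
    (hsum : (∑ s ∈ P, ((A ∩ A.image (fun a => a - s)).card : ℝ)) = η * (A.card : ℝ)^2) :
    η^2 * (A.card : ℝ)^6 /
        (((((A ×ˢ A) ×ˢ (A ×ˢ A) ×ˢ (A ×ˢ A)).filter
          (fun q => q.1.1 - q.1.2 = q.2.1.1 - q.2.1.2 ∧
            q.1.1 - q.1.2 = q.2.2.1 - q.2.2.2)).card : ℝ)) ≤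
      ∑ s ∈ P, ((A + (A ∩ A.image (fun a => a - s))).card : ℝ) :=
  stmt19_general A P η hsum
end
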